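/- arXiv:2403.12355 — 2 statements merged into one kernel-verified Lean document; each statement's English description precedes it below -/
import Mathlib

section
/- Let G be a finite nilpotent group of nilpotency class L and rank r. Then |G| ≤ |G_ab|^{2·r^L}. -/
open scoped BigOperators
open scoped Classical

noncomputable section

/-- A subset of a group is symmetric if it is closed under taking inverses. -/
def SymmSet {G : Type*} [Group G] (S : Set G) : Prop := ∀ s : G, s ∈ S ↔ s⁻¹ ∈ S

/-- The word length of `g` with respect to `S`: the least `n` such that `g` is a product
of a list of `n` elements of `S`. -/
def wordLength {G : Type*} [Group G] (S : Set G) (g : G) : ℕ :=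
  sInf {n | ∃ l : List G, (∀ x ∈ l, x ∈ S) ∧ l.length = n ∧ l.prod = g}

/-- The diameter of a subset `H` of `G` in the Cayley graph of `G` w.r.t. `S`. -/
def setDiam {G : Type*} [Group G] (S H : Set G) : ℕ := sSup (wordLength S '' H)

/-- `Diam_S(H/N)`: the least `D` such that every `h ∈ H` can be written as `h = w * u` with
`u ∈ N` and `w` a product of at most `D` elements of `S`. -/
def quotDiam {G : Type*} [Group G] (S H N : Set G) : ℕ :=
  sInf {D | ∀ h ∈ H, ∃ l : List G, (∀ x ∈ l, x ∈ S) ∧ l.length ≤ D ∧ ∃ u ∈ N, h = l.prod * u}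

/-- `G` has rank `r`: `r` is the least `n` such that some set of `n` elements of `G`
together with their inverses generates `G`. -/
def HasRank (G : Type*) [Group G] (r : ℕ) : Prop :=
  IsLeast {n | ∃ T : Finset G, T.card = n ∧ Subgroup.closure ((T : Set G) ∪ (T : Set G)⁻¹) = ⊤} r

/-- `G` is nilpotent of nilpotency class exactly `L`; with the paper's indexing
`G_i := lowerCentralSeries G (i-1)`, this says `G_{L+1} = {1} ≠ G_L`. -/
def NilpotencyClassEq (G : Type*) [Group G] (L : ℕ) : Prop :=
  (⊤ : Subgroup G).lowerCentralSeries L = ⊥ ∧ (⊤ : Subgroup G).lowerCentralSeries (L - 1) ≠ ⊥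

/-- Transition matrix of the simple random walk on the Cayley graph `Cay(G,S)`. -/
def transMatrix {G : Type*} [Group G] [Fintype G] (S : Set G) : Matrix G G ℝ :=
  fun x y => if x⁻¹ * y ∈ S then ((S.ncard : ℝ))⁻¹ else 0

/-- Heat kernel `P_t = exp (t (K - I))` of the simple random walk on `Cay(G,S)`. -/
def heatKernel {G : Type*} [Group G] [Fintype G] (S : Set G) (t : ℝ) : Matrix G G ℝ :=
  NormedSpace.exp (t • (transMatrix S - 1))

/-- Transition matrix of the projected walk on `G ⧸ N`. -/
def quotTransMatrix {G : Type*} [Group G] (S : Set G) (N : Subgroup G) [N.Normal] :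
    Matrix (G ⧸ N) (G ⧸ N) ℝ :=
  fun C C' => (({s ∈ S | C * (QuotientGroup.mk s : G ⧸ N) = C'}).ncard : ℝ) / (S.ncard : ℝ)

/-- Heat kernel of the projected walk on `G ⧸ N`. -/
def quotHeatKernel {G : Type*} [Group G] [Fintype G] (S : Set G) (N : Subgroup G) [N.Normal]
    (t : ℝ) : Matrix (G ⧸ N) (G ⧸ N) ℝ :=
  letI : Fintype (G ⧸ N) := Fintype.ofFinite _
  NormedSpace.exp (t • (quotTransMatrix S N - 1))

/-- `ε`-mixing time of the simple random walk on `Cay(G,S)` started at the identity. -/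
def mixingTime {G : Type*} [Group G] [Fintype G] (S : Set G) (ε : ℝ) : ℝ :=
  sInf {t : ℝ | 0 ≤ t ∧ (∑ y : G, |heatKernel S t 1 y - (Fintype.card G : ℝ)⁻¹|) / 2 ≤ ε}

/-- `ε`-mixing time of the projected walk on `G ⧸ N` started at the identity coset. -/
def quotMixingTime {G : Type*} [Group G] [Fintype G] (S : Set G) (N : Subgroup G) [N.Normal]
    (ε : ℝ) : ℝ :=
  letI : Fintype (G ⧸ N) := Fintype.ofFinite _
  sInf {t : ℝ | 0 ≤ t ∧
    (∑ C : G ⧸ N, |quotHeatKernel S N t 1 C - (Nat.card (G ⧸ N) : ℝ)⁻¹|) / 2 ≤ ε}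

/-- Second-largest eigenvalue of a symmetric stochastic matrix, via the variational
characterization over mean-zero functions. -/
def secondEig {X : Type*} [Fintype X] (K : Matrix X X ℝ) : ℝ :=
  sSup {r : ℝ | ∃ f : X → ℝ, f ≠ 0 ∧ (∑ x, f x) = 0 ∧
    r = (∑ x, ∑ y, f x * K x y * f y) / (∑ x, (f x) ^ 2)}

/-- Relaxation time `1/(1-λ)`. -/
def relaxTime {X : Type*} [Fintype X] (K : Matrix X X ℝ) : ℝ := 1 / (1 - secondEig K)

/-- Relaxation time of the projected walk on `G ⧸ N`. -/
def quotRelaxTime {G : Type*} [Group G] [Fintype G] (S : Set G) (N : Subgroup G) [N.Normal] : ℝ :=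
  letI : Fintype (G ⧸ N) := Fintype.ofFinite _
  relaxTime (quotTransMatrix S N)

/-- The paper's commutator `[x,y] = x⁻¹ y⁻¹ x y`. -/
def pcomm {G : Type*} [Group G] (x y : G) : G := x⁻¹ * y⁻¹ * x * y

/-- Iterated commutator `ρ(x, y₁, …, y_k) = [⋯[[x,y₁],y₂]⋯, y_k]`. -/
def rho {G : Type*} [Group G] (x : G) (l : List G) : G := l.foldl pcomm x

/-- Word length in `G` modulo `N`: the least `n` such that `g = w * u` with `u ∈ N` and
`w` a product of `n` elements of `S`. -/
def quotLength {G : Type*} [Group G] (S N : Set G) (g : G) : ℕ :=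
  sInf {n | ∃ l : List G, (∀ x ∈ l, x ∈ S) ∧ l.length = n ∧ ∃ u ∈ N, g = l.prod * u}


/-! Write `G = G₁ ≥ G₂ ≥ ⋯` for the lower central series and let `T` be a generating set of size
`r`. Modulo `G_{i+2}` the commutator `⁅x, g⁆` (`x ∈ G_i`) is central, hence multiplicative in
each variable, and it vanishes for `x ∈ G_{i+1}`. Since `T` generates `G`, the map
`(x_t)_{t ∈ T} ↦ ∏ ⁅x_t, t⁆` therefore sends `(G_i/G_{i+1})^T` onto `G_{i+1}/G_{i+2}`, so
`|G_{i+1} : G_{i+2}| ≤ |G_i : G_{i+1}|^r ≤ |G_ab|^{r^i}`. Multiplying along the series,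
`|G| ≤ |G_ab|^{1 + r + ⋯ + r^{L-1}}`, and the exponent is below `r^L` once `r ≥ 2`; a group of
rank at most one is cyclic, hence abelian. -/

open Subgroup QuotientGroup commutatorElement

section

variable {G : Type*} [Group G]

theorem commutatorElement_mul_left_of_mem_center {a b c : G} (h : ⁅b, c⁆ ∈ center G) :
    ⁅a * b, c⁆ = ⁅a, c⁆ * ⁅b, c⁆ := by
  rw [commutatorElement_mul_left_eq_conj_mul, mem_center_iff.mp h a, mul_inv_cancel_right,
    mem_center_iff.mp h]

theorem commutatorElement_mul_right_of_mem_center {a b c : G} (h : ⁅a, c⁆ ∈ center G) :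
    ⁅a, b * c⁆ = ⁅a, b⁆ * ⁅a, c⁆ := by
  rw [commutatorElement_mul_right_eq_mul_conj, mul_assoc _ b, mem_center_iff.mp h b,
    mul_assoc, mul_inv_cancel_right]

theorem card_map_mk'_eq_relIndex (K M : Subgroup G) [M.Normal] :
    Nat.card (K.map (mk' M)) = M.relIndex K := by
  rw [← relIndex_bot_left, ← map_mk'_self M, relIndex_map_map, ker_mk', sup_idem,
    relIndex_sup_right]

theorem index_eq_prod_relIndex_of_antitone {A : ℕ → Subgroup G} (hA : Antitone A)
    (h0 : A 0 = ⊤) (n : ℕ) : (A n).index = ∏ i ∈ Finset.range n, (A (i + 1)).relIndex (A i) := by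
  induction n with
  | zero => rw [h0, index_top, Finset.prod_range_zero]
  | succ n ih =>
    rw [Finset.prod_range_succ, ← ih, mul_comm, relIndex_mul_index (hA n.le_succ)]

section CommutatorPairing

variable {H M : Subgroup G} [M.Normal]

theorem mk_mem_center_of_commutator_le (hHM : ⁅H, (⊤ : Subgroup G)⁆ ≤ M) {h : G} (hh : h ∈ H) :
    (h : G ⧸ M) ∈ center (G ⧸ M) := by
  refine mem_center_iff.mpr fun g => ?_
  induction g using QuotientGroup.induction_on with | H g => ?_
  rw [← mk_mul, ← mk_mul, QuotientGroup.eq]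
  have hcomm : (g * h)⁻¹ * (h * g) = ⁅h⁻¹, g⁻¹⁆ := by group
  rw [hcomm]
  exact hHM (commutator_mem_commutator (H.inv_mem hh) (mem_top _))

theorem commutatorElement_mk_mem_center
    (hM : ⁅⁅H, (⊤ : Subgroup G)⁆, (⊤ : Subgroup G)⁆ ≤ M) {h : G} (hh : h ∈ H) (g : G) :
    ⁅(h : G ⧸ M), (g : G ⧸ M)⁆ ∈ center (G ⧸ M) := by
  rw [← mk'_apply, ← mk'_apply, ← map_commutatorElement, mk'_apply]
  exact mk_mem_center_of_commutator_le hM (commutator_mem_commutator hh (mem_top g))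

def commutatorLeftHom (hM : ⁅⁅H, (⊤ : Subgroup G)⁆, (⊤ : Subgroup G)⁆ ≤ M) (s : G) :
    H →* G ⧸ M :=
  MonoidHom.mk' (fun h => ⁅((h : G) : G ⧸ M), (s : G ⧸ M)⁆) fun a b => by
    rw [coe_mul, mk_mul]
    exact commutatorElement_mul_left_of_mem_center (commutatorElement_mk_mem_center hM b.2 s)

def commutatorRightHom (hM : ⁅⁅H, (⊤ : Subgroup G)⁆, (⊤ : Subgroup G)⁆ ≤ M) {h : G}
    (hh : h ∈ H) : G →* G ⧸ M :=
  MonoidHom.mk' (fun g => ⁅(h : G ⧸ M), (g : G ⧸ M)⁆) fun a b => by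
    rw [mk_mul]
    exact commutatorElement_mul_right_of_mem_center (commutatorElement_mk_mem_center hM hh b)

end CommutatorPairing

theorem relIndex_commutator_le_pow [Finite G] (H : Subgroup G) [H.Normal] {T : Finset G}
    (hT : closure (T : Set G) = ⊤) :
    ⁅⁅H, (⊤ : Subgroup G)⁆, (⊤ : Subgroup G)⁆.relIndex ⁅H, ⊤⁆ ≤
      ⁅H, (⊤ : Subgroup G)⁆.relIndex H ^ T.card := by
  set K := ⁅H, (⊤ : Subgroup G)⁆
  set M := ⁅K, (⊤ : Subgroup G)⁆
  have hM : ⁅K, ⊤⁆ ≤ M := le_rfl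
  let φ : (s : T) → H ⧸ K.subgroupOf H →* G ⧸ M := fun s =>
    QuotientGroup.lift _ (commutatorLeftHom hM s) fun h hh => by
      show ⁅((h : G) : G ⧸ M), (s : G ⧸ M)⁆ = 1
      rw [← mk'_apply, ← mk'_apply, ← map_commutatorElement, mk'_apply, eq_one_iff]
      exact commutator_mem_commutator (mem_subgroupOf.mp hh) (mem_top _)
  have hcomm : Pairwise fun s t => ∀ x y, Commute (φ s x) (φ t y) := fun s t _ x y => by
    induction y using QuotientGroup.induction_on with | H y => ?_
    exact mem_center_iff.mp (commutatorElement_mk_mem_center hM y.2 t) (φ s x)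
  have hrange : K.map (mk' M) ≤ (MonoidHom.noncommPiCoprod φ hcomm).range := by
    rw [MonoidHom.noncommPiCoprod_range, map_le_iff_le_comap, commutator_le]
    intro h hh g _
    have hψ : (closure (T : Set G)).map (commutatorRightHom hM hh) ≤ ⨆ s : T, (φ s).range := by
      rw [MonoidHom.map_closure, closure_le]
      rintro _ ⟨s, hs, rfl⟩
      exact mem_iSup_of_mem ⟨s, hs⟩ ⟨mk ⟨h, hh⟩, rfl⟩
    rw [hT] at hψ
    rw [mem_comap, map_commutatorElement]
    exact hψ ⟨g, mem_top g, rfl⟩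
  calc M.relIndex K = Nat.card (K.map (mk' M)) := (card_map_mk'_eq_relIndex K M).symm
    _ ≤ Nat.card (MonoidHom.noncommPiCoprod φ hcomm).range := card_le_of_le hrange
    _ ≤ Nat.card (T → H ⧸ K.subgroupOf H) :=
      Nat.card_le_card_of_surjective _ (MonoidHom.rangeRestrict_surjective _)
    _ = K.relIndex H ^ T.card := by
      rw [Nat.card_fun, Nat.card_eq_fintype_card (α := T), Fintype.card_coe]
      rfl

theorem relIndex_lowerCentralSeries_succ_le [Finite G] {T : Finset G}
    (hT : closure (T : Set G) = ⊤) (i : ℕ) :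
    ((⊤ : Subgroup G).lowerCentralSeries (i + 1)).relIndex
        ((⊤ : Subgroup G).lowerCentralSeries i) ≤ (commutator G).index ^ T.card ^ i := by
  induction i with
  | zero =>
    rw [top_lowerCentralSeries_one, Subgroup.lowerCentralSeries_zero, relIndex_top_right,
      pow_zero, pow_one]
  | succ i ih =>
    calc _ ≤ ((⊤ : Subgroup G).lowerCentralSeries (i + 1)).relIndex
            ((⊤ : Subgroup G).lowerCentralSeries i) ^ T.card :=
          relIndex_commutator_le_pow _ hT
      _ ≤ ((commutator G).index ^ T.card ^ i) ^ T.card := Nat.pow_le_pow_left ih _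
      _ = (commutator G).index ^ T.card ^ (i + 1) := by rw [← pow_mul, ← pow_succ]

theorem card_le_index_commutator_pow_geom_sum [Finite G] {T : Finset G}
    (hT : closure (T : Set G) = ⊤) {n : ℕ} (hn : (⊤ : Subgroup G).lowerCentralSeries n = ⊥) :
    Nat.card G ≤ (commutator G).index ^ ∑ i ∈ Finset.range n, T.card ^ i := by
  rw [← index_bot, ← hn,
    index_eq_prod_relIndex_of_antitone (Subgroup.lowerCentralSeries_antitone ⊤)
      (Subgroup.lowerCentralSeries_zero ⊤), ← Finset.prod_pow_eq_pow_sum]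
  exact Finset.prod_le_prod' fun i _ => relIndex_lowerCentralSeries_succ_le hT i

end

/-- Corollary `ab_size`, second part: `|G| ≤ |G_ab|^{2 r^L}`. -/
theorem card_le_ab_pow (G : Type*) [Group G] [Fintype G] (L r : ℕ)
    (hL : NilpotencyClassEq G L) (hr : HasRank G r) :
    Nat.card G ≤ (commutator G).index ^ (2 * r ^ L) := by
  obtain ⟨⟨T, rfl, hT⟩, -⟩ := hr
  rw [Subgroup.closure_union, closure_inv, sup_idem] at hT
  obtain ⟨n, hn, hsum⟩ : ∃ n, (⊤ : Subgroup G).lowerCentralSeries n = ⊥ ∧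
      ∑ i ∈ Finset.range n, T.card ^ i ≤ 2 * T.card ^ L := by
    obtain h0 | h1 | h2 : T.card = 0 ∨ T.card = 1 ∨ 2 ≤ T.card := by omega
    · refine ⟨0, ?_, by simp⟩
      rw [Subgroup.lowerCentralSeries_zero, ← hT, Finset.card_eq_zero.mp h0, Finset.coe_empty,
        Subgroup.closure_empty]
    · refine ⟨1, ?_, by simp [h1]⟩
      obtain ⟨t, rfl⟩ := Finset.card_eq_one.mp h1
      have : IsCyclic G := isCyclic_iff_exists_zpowers_eq_top.mpr
        ⟨t, by rw [zpowers_eq_closure, ← hT, Finset.coe_singleton]⟩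
      rw [top_lowerCentralSeries_one, commutator_eq_bot]
    · exact ⟨L, hL.1, (Nat.geomSum_lt h2 fun i hi => Finset.mem_range.mp hi).le.trans
        (Nat.le_mul_of_pos_left _ two_pos)⟩
  calc Nat.card G ≤ (commutator G).index ^ ∑ i ∈ Finset.range n, T.card ^ i :=
        card_le_index_commutator_pow_geom_sum hT hn
    _ ≤ (commutator G).index ^ (2 * T.card ^ L) :=
        Nat.pow_le_pow_right (Nat.pos_of_ne_zero index_ne_zero_of_finite) hsum

end
end

section
/- Let G be a finite nilpotent group with lower central series (G_i), let ℓ ≥ 1, and let R_ℓ ⊆ G_ℓ be a set of coset representatives for G_ℓ/G_{ℓ+1} (the quotient map restricts to a bijection from R_ℓ onto G_ℓ/G_{ℓ+1}). Fix n ≥ 1 and h₁, …, h_n ∈ G, and let J be the subgroup of G_{ℓ+1}/G_{ℓ+2} generated by { [h_i, g]·G_{ℓ+2} : 1 ≤ i ≤ n, g ∈ R_ℓ }. Then for every element q of G_{ℓ+1}/G_{ℓ+2}, the number of tuples (u₁, …, u_n) ∈ R_ℓ^n with ( ∏_{i=1}^{n} [h_i, u_i] )·G_{ℓ+2} = q equals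 |R_ℓ|^n / |J| if q ∈ J, and equals 0 otherwise. Equivalently, if U₁, …, U_n are independent uniform random elements of R_ℓ, then ( ∏_{i=1}^{n} [h_i, U_i] )·G_{ℓ+2} is uniformly distributed on J. -/
open scoped BigOperators
open scoped Classical

noncomputable section

open scoped commutatorElement

/-! With `P = G_ℓ`, `M = G_{ℓ+1}`, `N = G_{ℓ+2}` we have `⁅P, G⁆ ≤ M` and `⁅M, G⁆ ≤ N`, so the
classes of elements of `M` are central in `G/N`, and the identity
`[x, uv] = [x, v] · v⁻¹[x, u]v` makes `u ↦ [x, u]·N` a homomorphism `P → G/N` that kills `M`.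
Transporting along the bijection `R_ℓ ≃ P/M`, the map `u ↦ (∏ᵢ [hᵢ, uᵢ])·N` becomes the
homomorphism `(P/M)ⁿ → G/N`, `w ↦ ∏ᵢ [hᵢ, wᵢ]·N`, whose image is `J`. The fibres of a
homomorphism over its image are cosets of the kernel, so each has `|R_ℓ|ⁿ/|J|` elements. -/

theorem MonoidHom.card_preimage_mul_card_range {A B : Type*} [Group A] [Group B] [Finite A]
    (f : A →* B) {q : B} (hq : q ∈ f.range) :
    Nat.card (f ⁻¹' {q}) * Nat.card f.range = Nat.card A := by
  obtain ⟨a, rfl⟩ := hq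
  rw [Nat.card_congr (f.fiberEquivKer a), ← Subgroup.index_ker f, f.ker.card_mul_index]

theorem Subgroup.commutator_lowerCentralSeries_pred_le {G : Type*} [Group G] (ℓ : ℕ) :
    ⁅(⊤ : Subgroup G).lowerCentralSeries (ℓ - 1), ⊤⁆ ≤ (⊤ : Subgroup G).lowerCentralSeries ℓ := by
  cases ℓ with
  | zero => exact le_top
  | succ k => exact le_rfl

section PaperCommutator

variable {G : Type*} [Group G]

theorem pcomm_eq_commutatorElement (x y : G) : pcomm x y = ⁅x⁻¹, y⁻¹⁆ := by
  simp only [pcomm, commutatorElement_def, inv_inv]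

theorem pcomm_mul_right (x u v : G) : pcomm x (u * v) = pcomm x v * (v⁻¹ * pcomm x u * v) := by
  simp only [pcomm]
  group

theorem pcomm_mem_of_commutator_le {M N : Subgroup G} (hMN : ⁅M, ⊤⁆ ≤ N) (x : G) {m : G}
    (hm : m ∈ M) : pcomm x m ∈ N := by
  rw [pcomm_eq_commutatorElement, ← commutatorElement_inv]
  exact inv_mem (hMN (Subgroup.commutator_mem_commutator (inv_mem hm) (Subgroup.mem_top _)))

theorem QuotientGroup.mk_mem_center_of_commutator_le {M N : Subgroup G} [N.Normal]
    (hMN : ⁅M, ⊤⁆ ≤ N) {m : G} (hm : m ∈ M) : (m : G ⧸ N) ∈ Subgroup.center (G ⧸ N) := by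
  have hstep : m ∈ Subgroup.upperCentralSeriesStep N := fun y =>
    hMN (Subgroup.commutator_mem_commutator hm (Subgroup.mem_top y))
  rwa [Subgroup.upperCentralSeriesStep_eq_comap_center] at hstep

theorem QuotientGroup.mk_subgroupOf_eq_mk_iff {P M : Subgroup G} (u v : P) :
    (u : P ⧸ M.subgroupOf P) = v ↔ (u : G ⧸ M) = v := by
  rw [QuotientGroup.eq, QuotientGroup.eq, Subgroup.mem_subgroupOf]
  simp

variable {P M N : Subgroup G} [M.Normal] [N.Normal] {R : Set G}

def equivQuotientSubgroupOfOfBijOn (hRP : R ⊆ P)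
    (hR : Set.BijOn (QuotientGroup.mk' M) R (QuotientGroup.mk' M '' P)) :
    R ≃ P ⧸ M.subgroupOf P :=
  Equiv.ofBijective (fun r => ((⟨r, hRP r.2⟩ : P) : P ⧸ M.subgroupOf P)) <| by
    refine ⟨fun r s hrs => Subtype.ext <| hR.injOn r.2 s.2 ?_, fun a => ?_⟩
    · exact (QuotientGroup.mk_subgroupOf_eq_mk_iff _ _).1 hrs
    · induction a using QuotientGroup.induction_on with
      | H u =>
        obtain ⟨r, hr, hru⟩ := hR.surjOn ⟨u, u.2, rfl⟩
        exact ⟨⟨r, hr⟩, (QuotientGroup.mk_subgroupOf_eq_mk_iff _ _).2 hru⟩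

def pcommHom (hPM : ⁅P, ⊤⁆ ≤ M) (hMN : ⁅M, ⊤⁆ ≤ N) (x : G) : P →* G ⧸ N :=
  MonoidHom.mk' (fun u => ((pcomm x u : G) : G ⧸ N)) fun u v => by
    have hcent := Subgroup.mem_center_iff.1 <|
      QuotientGroup.mk_mem_center_of_commutator_le hMN (pcomm_mem_of_commutator_le hPM x u.2)
    rw [Subgroup.coe_mul, pcomm_mul_right, QuotientGroup.mk_mul, QuotientGroup.mk_mul,
      QuotientGroup.mk_mul, QuotientGroup.mk_inv, hcent, inv_mul_cancel_right, hcent]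

def pcommQuotHom (hPM : ⁅P, ⊤⁆ ≤ M) (hMN : ⁅M, ⊤⁆ ≤ N) (x : G) :
    P ⧸ M.subgroupOf P →* G ⧸ N :=
  QuotientGroup.lift _ (pcommHom hPM hMN x) fun _ hm =>
    (QuotientGroup.eq_one_iff _).2 (pcomm_mem_of_commutator_le hMN x (Subgroup.mem_subgroupOf.1 hm))

theorem pcommQuotHom_mk (hPM : ⁅P, ⊤⁆ ≤ M) (hMN : ⁅M, ⊤⁆ ≤ N) (x : G) (u : P) :
    pcommQuotHom hPM hMN x u = ((pcomm x u : G) : G ⧸ N) :=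
  rfl

theorem pairwise_commute_pcommQuotHom {ι : Type*} (hPM : ⁅P, ⊤⁆ ≤ M) (hMN : ⁅M, ⊤⁆ ≤ N)
    (h : ι → G) :
    Pairwise fun i j => ∀ a b : P ⧸ M.subgroupOf P,
      Commute (pcommQuotHom hPM hMN (h i) a) (pcommQuotHom hPM hMN (h j) b) := by
  intro i j _ a b
  induction b using QuotientGroup.induction_on with
  | H u =>
    rw [pcommQuotHom_mk]
    exact Subgroup.mem_center_iff.1
      (QuotientGroup.mk_mem_center_of_commutator_le hMN (pcomm_mem_of_commutator_le hPM _ u.2)) _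

def pcommPiHom {ι : Type*} [Fintype ι] (hPM : ⁅P, ⊤⁆ ≤ M) (hMN : ⁅M, ⊤⁆ ≤ N) (h : ι → G) :
    (ι → P ⧸ M.subgroupOf P) →* G ⧸ N :=
  MonoidHom.noncommPiCoprod (fun i => pcommQuotHom hPM hMN (h i))
    (pairwise_commute_pcommQuotHom hPM hMN h)

theorem pcommPiHom_apply {n : ℕ} (hPM : ⁅P, ⊤⁆ ≤ M) (hMN : ⁅M, ⊤⁆ ≤ N) (h : Fin n → G)
    (w : Fin n → P ⧸ M.subgroupOf P) :
    pcommPiHom hPM hMN h w = (List.ofFn fun i => pcommQuotHom hPM hMN (h i) (w i)).prod := by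
  rw [pcommPiHom, MonoidHom.noncommPiCoprod_apply]
  simp only [Finset.noncommProd, Fin.univ_val_map, Multiset.noncommProd_coe]

theorem range_pcommQuotHom (hPM : ⁅P, ⊤⁆ ≤ M) (hMN : ⁅M, ⊤⁆ ≤ N) (hRP : R ⊆ P)
    (hR : Set.BijOn (QuotientGroup.mk' M) R (QuotientGroup.mk' M '' P)) (x : G) :
    ((pcommQuotHom hPM hMN x).range : Set (G ⧸ N)) =
      (fun g => ((pcomm x g : G) : G ⧸ N)) '' R := by
  rw [MonoidHom.coe_range, ← (equivQuotientSubgroupOfOfBijOn hRP hR).surjective.range_comp,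
    Set.image_eq_range]
  rfl

theorem range_pcommPiHom {ι : Type*} [Fintype ι] (hPM : ⁅P, ⊤⁆ ≤ M) (hMN : ⁅M, ⊤⁆ ≤ N)
    (hRP : R ⊆ P) (hR : Set.BijOn (QuotientGroup.mk' M) R (QuotientGroup.mk' M '' P))
    (h : ι → G) :
    (pcommPiHom hPM hMN h).range =
      Subgroup.closure (QuotientGroup.mk' N '' {x | ∃ i, ∃ g ∈ R, x = pcomm (h i) g}) := by
  have hgen : QuotientGroup.mk' N '' {x | ∃ i, ∃ g ∈ R, x = pcomm (h i) g} =
      ⋃ i, ((pcommQuotHom hPM hMN (h i)).range : Set (G ⧸ N)) := by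
    simp_rw [range_pcommQuotHom hPM hMN hRP hR]
    ext
    simp
  rw [pcommPiHom, MonoidHom.noncommPiCoprod_range, hgen, Subgroup.closure_iUnion]
  simp_rw [Subgroup.closure_eq]

theorem pcommPiHom_apply_equivQuotientSubgroupOfOfBijOn {n : ℕ} (hPM : ⁅P, ⊤⁆ ≤ M)
    (hMN : ⁅M, ⊤⁆ ≤ N) (hRP : R ⊆ P)
    (hR : Set.BijOn (QuotientGroup.mk' M) R (QuotientGroup.mk' M '' P)) (h : Fin n → G)
    (v : Fin n → R) :
    pcommPiHom hPM hMN h (fun i => equivQuotientSubgroupOfOfBijOn hRP hR (v i)) =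
      QuotientGroup.mk' N (List.ofFn fun i => pcomm (h i) (v i)).prod := by
  rw [pcommPiHom_apply, map_list_prod, List.map_ofFn]
  rfl

def pcommProdFiberEquiv {n : ℕ} (hPM : ⁅P, ⊤⁆ ≤ M) (hMN : ⁅M, ⊤⁆ ≤ N) (hRP : R ⊆ P)
    (hR : Set.BijOn (QuotientGroup.mk' M) R (QuotientGroup.mk' M '' P)) (h : Fin n → G)
    (q : G ⧸ N) :
    {u : Fin n → G // (∀ i, u i ∈ R) ∧
        QuotientGroup.mk' N (List.ofFn fun i => pcomm (h i) (u i)).prod = q} ≃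
      pcommPiHom hPM hMN h ⁻¹' {q} :=
  (Equiv.subtypeSubtypeEquivSubtypeInter _ _).symm.trans <|
    Equiv.subtypeEquiv (Equiv.subtypePiEquivPi.trans
      (Equiv.piCongrRight fun _ => equivQuotientSubgroupOfOfBijOn hRP hR)) fun u => by
        rw [Set.mem_preimage, Set.mem_singleton_iff,
          ← pcommPiHom_apply_equivQuotientSubgroupOfOfBijOn hPM hMN hRP hR h fun i => ⟨u.1 i, u.2 i⟩]
        rfl

end PaperCommutator

theorem commutator_product_uniform_general (G : Type*) [Group G] [Fintype G] (ℓ : ℕ)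
    (R : Set G) (hRsub : R ⊆ ((⊤ : Subgroup G).lowerCentralSeries (ℓ - 1) : Set G))
    (hRrep : Set.BijOn (QuotientGroup.mk' ((⊤ : Subgroup G).lowerCentralSeries ℓ)) R
      ((QuotientGroup.mk' ((⊤ : Subgroup G).lowerCentralSeries ℓ)) '' ((⊤ : Subgroup G).lowerCentralSeries (ℓ - 1) : Set G)))
    (n : ℕ) (h : Fin n → G) :
    ∀ q : G ⧸ (⊤ : Subgroup G).lowerCentralSeries (ℓ + 1),
      (Nat.card {u : Fin n → G // (∀ i, u i ∈ R) ∧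
          QuotientGroup.mk' ((⊤ : Subgroup G).lowerCentralSeries (ℓ + 1))
            ((List.ofFn (fun i => pcomm (h i) (u i))).prod) = q} : ℝ) =
        if q ∈ Subgroup.closure ((QuotientGroup.mk' ((⊤ : Subgroup G).lowerCentralSeries (ℓ + 1))) ''
              {x | ∃ i : Fin n, ∃ g ∈ R, x = pcomm (h i) g})
        then (R.ncard : ℝ) ^ n /
          (Nat.card (↥(Subgroup.closure ((QuotientGroup.mk' ((⊤ : Subgroup G).lowerCentralSeries (ℓ + 1))) ''
            {x | ∃ i : Fin n, ∃ g ∈ R, x = pcomm (h i) g}))) : ℝ)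
        else 0 := by
  intro q
  have hPM := Subgroup.commutator_lowerCentralSeries_pred_le (G := G) ℓ
  have hMN := (Subgroup.lowerCentralSeries_succ (⊤ : Subgroup G) ℓ).ge
  rw [Nat.card_congr (pcommProdFiberEquiv hPM hMN hRsub hRrep h q),
    ← range_pcommPiHom hPM hMN hRsub hRrep h]
  split_ifs with hq
  · rw [eq_div_iff (Nat.cast_ne_zero.2 Nat.card_pos.ne'), ← Nat.cast_mul,
      MonoidHom.card_preimage_mul_card_range _ hq, Nat.card_fun, Nat.card_fin,
      ← Nat.card_congr (equivQuotientSubgroupOfOfBijOn hRsub hRrep), Nat.card_coe_set_eq,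
      Nat.cast_pow]
  · rw [Set.preimage_singleton_eq_empty.2 hq]
    simp

/-- Lemma `unif_span`: if `U₁,…,U_n` are independent uniform on the set of
coset representatives `R_ℓ`, then `(∏ᵢ [hᵢ, Uᵢ])·G_{ℓ+2}` is uniform on the subgroup `J`
generated by `{[hᵢ, g]·G_{ℓ+2}}`; equivalently, the number of tuples `u ∈ R_ℓⁿ` whose product of
commutators lands in the class `q` is `|R_ℓ|ⁿ/|J|` for `q ∈ J` and `0` otherwise. -/
theorem commutator_product_uniform (G : Type*) [Group G] [Fintype G]
    (hnil : Group.IsNilpotent G) (ℓ : ℕ) (hℓ1 : 1 ≤ ℓ)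
    (R : Set G) (hRsub : R ⊆ ((⊤ : Subgroup G).lowerCentralSeries (ℓ - 1) : Set G))
    (hRrep : Set.BijOn (QuotientGroup.mk' ((⊤ : Subgroup G).lowerCentralSeries ℓ)) R
      ((QuotientGroup.mk' ((⊤ : Subgroup G).lowerCentralSeries ℓ)) '' ((⊤ : Subgroup G).lowerCentralSeries (ℓ - 1) : Set G)))
    (n : ℕ) (hn : 1 ≤ n) (h : Fin n → G) :
    ∀ q : G ⧸ (⊤ : Subgroup G).lowerCentralSeries (ℓ + 1),
      (Nat.card {u : Fin n → G // (∀ i, u i ∈ R) ∧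
          QuotientGroup.mk' ((⊤ : Subgroup G).lowerCentralSeries (ℓ + 1))
            ((List.ofFn (fun i => pcomm (h i) (u i))).prod) = q} : ℝ) =
        if q ∈ Subgroup.closure ((QuotientGroup.mk' ((⊤ : Subgroup G).lowerCentralSeries (ℓ + 1))) ''
              {x | ∃ i : Fin n, ∃ g ∈ R, x = pcomm (h i) g})
        then (R.ncard : ℝ) ^ n /
          (Nat.card (↥(Subgroup.closure ((QuotientGroup.mk' ((⊤ : Subgroup G).lowerCentralSeries (ℓ + 1))) ''
            {x | ∃ i : Fin n, ∃ g ∈ R, x = pcomm (h i) g}))) : ℝ)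
        else 0 :=
  commutator_product_uniform_general G ℓ R hRsub hRrep n h

end
end
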